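/- arXiv:2405.09670 — 7 statements merged into one kernel-verified Lean document; each statement's English description precedes it below -/
import Mathlib

section
/- The kernel of the adjoint T* of T_{α,β} is one-dimensional: ker T*_{α,β} = ℂ·(e_0 − (conj(α)·β/conj(β))·e_1). -/
/-!
The `n`-th coordinate of `T† x` is `⟪T (e n), x⟫`, so `T† x` has coordinates
`(conj α · β · x₀ + conj β · x₁, x₂, x₃, …)`. It vanishes iff `x` is supported on `{0, 1}` with
`conj α · β · x₀ + conj β · x₁ = 0`, a single linear condition since `β ≠ 0`.
-/

open scoped ComplexConjugate

noncomputable section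

/-- The Hilbert space `H = ℓ²(ℕ, ℂ)`. -/
abbrev H : Type := lp (fun _ : ℕ => ℂ) 2

/-- The standard orthonormal basis vectors of `ℓ²(ℕ, ℂ)`. -/
noncomputable def e (n : ℕ) : H := lp.single 2 n (1 : ℂ)

open ContinuousLinearMap

lemma e_apply (m n : ℕ) : e m n = if n = m then 1 else 0 := by
  simp [e, Pi.single_apply]

lemma inner_e_left (n : ℕ) (x : H) : inner ℂ (e n) x = x n := by
  simp [e, lp.inner_single_left]

lemma adjoint_apply_apply (T : H →L[ℂ] H) (x : H) (n : ℕ) :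
    adjoint T x n = inner ℂ (T (e n)) x := by
  rw [← inner_e_left, adjoint_inner_right]

lemma adjoint_apply_eq_zero_iff (T : H →L[ℂ] H) (x : H) :
    adjoint T x = 0 ↔ ∀ n, inner ℂ (T (e n)) x = 0 := by
  simp only [← adjoint_apply_apply, lp.ext_iff, funext_iff, lp.coeFn_zero, Pi.zero_apply]

lemma smul_e_zero_add_smul_e_one_apply (a b : ℂ) (n : ℕ) :
    (a • e 0 + b • e 1) n = a * (if n = 0 then 1 else 0) + b * (if n = 1 then 1 else 0) := by
  simp only [lp.coeFn_add, lp.coeFn_smul, Pi.add_apply, Pi.smul_apply, e_apply, smul_eq_mul]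

lemma smul_e_zero_add_smul_e_one_eq_iff (a b : ℂ) (x : H) :
    a • e 0 + b • e 1 = x ↔ x 0 = a ∧ x 1 = b ∧ ∀ n, x (n + 2) = 0 := by
  constructor
  · rintro rfl
    simp [smul_e_zero_add_smul_e_one_apply]
  · rintro ⟨h0, h1, h⟩
    refine lp.ext (funext fun n => ?_)
    rcases n with _ | _ | n <;> simp [smul_e_zero_add_smul_e_one_apply, *]

lemma mem_span_e_zero_sub_smul_e_one_iff (c : ℂ) (x : H) :
    x ∈ Submodule.span ℂ {e 0 - c • e 1} ↔ x 1 = -c * x 0 ∧ ∀ n, x (n + 2) = 0 := by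
  rw [Submodule.mem_span_singleton]
  simp_rw [smul_sub, smul_smul, sub_eq_add_neg, ← neg_smul, smul_e_zero_add_smul_e_one_eq_iff,
    exists_eq_left', neg_mul, mul_comm]

lemma mem_ker_adjoint_iff {T : H →L[ℂ] H} {a b : ℂ} (hT0 : T (e 0) = a • e 0 + b • e 1)
    (hTn : ∀ n : ℕ, 1 ≤ n → T (e n) = e (n + 1)) (x : H) :
    x ∈ LinearMap.ker (adjoint T : H →ₗ[ℂ] H) ↔
      conj a * x 0 + conj b * x 1 = 0 ∧ ∀ n, x (n + 2) = 0 := by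
  rw [LinearMap.mem_ker, coe_coe, adjoint_apply_eq_zero_iff, ← Nat.and_forall_add_one]
  refine and_congr ?_ (forall_congr' fun n => ?_)
  · rw [hT0, inner_add_left, inner_smul_left, inner_smul_left, inner_e_left, inner_e_left]
  · rw [hTn (n + 1) (Nat.le_add_left 1 n), inner_e_left]

theorem kernel_adjoint_T_general (α β : ℂ) (hβ : β ≠ 0)
    (T : H →L[ℂ] H)
    (hT0 : T (e 0) = (α * conj β) • e 0 + β • e 1)
    (hTn : ∀ n : ℕ, 1 ≤ n → T (e n) = e (n + 1)) :
    LinearMap.ker (ContinuousLinearMap.adjoint T : H →ₗ[ℂ] H) =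
      Submodule.span ℂ {e 0 - (conj α * β / conj β) • e 1} := by
  have hβ' : conj β ≠ 0 := (map_ne_zero _).mpr hβ
  ext x
  rw [mem_ker_adjoint_iff hT0 hTn, mem_span_e_zero_sub_smul_e_one_iff]
  refine and_congr_left' ?_
  rw [map_mul, Complex.conj_conj, neg_mul, eq_neg_iff_add_eq_zero, div_mul_eq_mul_div,
    add_div' _ _ _ hβ', div_eq_zero_iff, or_iff_left hβ', add_comm, mul_comm (x 1)]

/-- The kernel of the adjoint of `T = T_{α,β}` is spanned by
`e 0 - (conj α * β / conj β) • e 1`. -/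
theorem kernel_adjoint_T (α β : ℂ) (hα : α ≠ 0) (hβ : β ≠ 0)
    (hnorm : ‖α‖ ^ 2 + ‖β‖ ^ 2 = 1)
    (T : H →L[ℂ] H)
    (hT0 : T (e 0) = (α * conj β) • e 0 + β • e 1)
    (hTn : ∀ n : ℕ, 1 ≤ n → T (e n) = e (n + 1)) :
    LinearMap.ker (ContinuousLinearMap.adjoint T : H →ₗ[ℂ] H) =
      Submodule.span ℂ {e 0 - (conj α * β / conj β) • e 1} :=
  kernel_adjoint_T_general α β hβ T hT0 hTn

end
end

section
/- The operator T_{α,β} is irreducible: if M is a closed subspace of H with T_{α,β} M ⊆ M and T_{α,β} M^⊥ ⊆ M^⊥, then M = {0} or M = H. -/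
/-!
The subspace `M` reduces `T`, hence is invariant under `T* T`. Now `T` is isometric on `(e 0)ᗮ`
and maps `e 0` to a vector of squared norm `|α|²|β|² + |β|² = 1 - |α|⁴` orthogonal to `T ((e 0)ᗮ)`,
so `T* T = 1 - |α|⁴ P`, with `P` the rank-one projection onto `e 0`. So `P` preserves `M`, which forces
`e 0 ∈ M` or `e 0 ∈ Mᗮ`. As `β ≠ 0`, a closed `T`-invariant subspace containing `e 0` contains
every `e n`, so it is all of `H`; applied to `M` or to `Mᗮ` this gives the claim.
-/

open scoped ComplexConjugate

noncomputable section

open ContinuousLinearMap InnerProductSpace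

section Reducing

variable {𝕜 E : Type*} [RCLike 𝕜] [NormedAddCommGroup E] [InnerProductSpace 𝕜 E]

theorem Submodule.mem_or_mem_orthogonal_of_inner_smul_mem (M : Submodule 𝕜 E) (v : E)
    (h : ∀ x ∈ M, inner 𝕜 v x • v ∈ M) : v ∈ M ∨ v ∈ Mᗮ := by
  by_cases hv : ∀ x ∈ M, inner 𝕜 v x = 0
  · exact .inr ((M.mem_orthogonal' v).2 hv)
  · push Not at hv
    obtain ⟨x, hxM, hvx⟩ := hv
    exact .inl ((M.smul_mem_iff hvx).1 (h x hxM))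

theorem ContinuousLinearMap.adjoint_apply_mem_of_orthogonal [CompleteSpace E]
    (T : E →L[𝕜] E) (M : Submodule 𝕜 E) [M.HasOrthogonalProjection]
    (hT : ∀ x ∈ Mᗮ, T x ∈ Mᗮ) {y : E} (hy : y ∈ M) : adjoint T y ∈ M := by
  rw [← M.orthogonal_orthogonal, Submodule.mem_orthogonal]
  intro u hu
  rw [adjoint_inner_right]
  exact Submodule.inner_left_of_mem_orthogonal hy (hT u hu)

theorem HilbertBasis.continuousLinearMap_ext {ι : Type*} [CompleteSpace E]
    (b : HilbertBasis ι 𝕜 E) {A B : E →L[𝕜] E}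
    (h : ∀ i j, inner 𝕜 (b i) (A (b j)) = inner 𝕜 (b i) (B (b j))) : A = B := by
  refine ext_on (Submodule.dense_iff_topologicalClosure_eq_top.2 b.dense_span) ?_
  rintro _ ⟨j, rfl⟩
  refine b.repr.injective (lp.ext (funext fun i => ?_))
  simpa only [b.repr_apply_apply] using h i j

end Reducing

theorem coe_default_hilbertBasis : ⇑(default : HilbertBasis ℕ ℂ H) = e := by
  funext n
  exact ((default : HilbertBasis ℕ ℂ H).repr_symm_single n).symm

theorem inner_e_e (m n : ℕ) : inner ℂ (e m) (e n) = if m = n then 1 else 0 := by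
  rw [← coe_default_hilbertBasis]
  exact orthonormal_iff_ite.1 (default : HilbertBasis ℕ ℂ H).orthonormal m n

theorem Submodule.eq_top_of_forall_e_mem (N : Submodule ℂ H) (hN : IsClosed (N : Set H))
    (h : ∀ n, e n ∈ N) : N = ⊤ := by
  rw [eq_top_iff, ← (default : HilbertBasis ℕ ℂ H).dense_span]
  refine Submodule.topologicalClosure_minimal _ (Submodule.span_le.2 ?_) hN
  rintro _ ⟨n, rfl⟩
  rw [coe_default_hilbertBasis]
  exact h n

section Shift

variable {α β : ℂ} {T : H →L[ℂ] H}

theorem Submodule.eq_top_of_e_zero_mem (hβ : β ≠ 0)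
    (hT0 : T (e 0) = (α * conj β) • e 0 + β • e 1)
    (hTn : ∀ n : ℕ, 1 ≤ n → T (e n) = e (n + 1))
    (N : Submodule ℂ H) (hN : IsClosed (N : Set H)) (hTN : ∀ x ∈ N, T x ∈ N)
    (h0 : e 0 ∈ N) : N = ⊤ := by
  have h1 : e 1 ∈ N := by
    have hβe1 : β • e 1 = T (e 0) - (α * conj β) • e 0 := by rw [hT0]; abel
    rw [← N.smul_mem_iff hβ, hβe1]
    exact N.sub_mem (hTN _ h0) (N.smul_mem _ h0)
  refine N.eq_top_of_forall_e_mem hN fun n => ?_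
  induction n with
  | zero => exact h0
  | succ k ih =>
    rcases k with _ | j
    · exact h1
    · rw [← hTn (j + 1) (by omega)]
      exact hTN _ ih

theorem inner_T_e_zero_self (hnorm : ‖α‖ ^ 2 + ‖β‖ ^ 2 = 1)
    (hT0 : T (e 0) = (α * conj β) • e 0 + β • e 1) :
    inner ℂ (T (e 0)) (T (e 0)) = 1 - (‖α‖ : ℂ) ^ 4 := by
  have hβsq : (‖β‖ : ℂ) ^ 2 = 1 - (‖α‖ : ℂ) ^ 2 := by
    exact_mod_cast (eq_sub_of_add_eq' hnorm)
  simp only [hT0, inner_add_left, inner_add_right, inner_smul_left, inner_smul_right, inner_e_e,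
    map_mul, RingHomCompTriple.comp_apply, RingHom.id_apply, ↓reduceIte, one_ne_zero, zero_ne_one,
    mul_one, mul_zero, add_zero, zero_add]
  rw [show α * conj β * (conj α * β) = (α * conj α) * (β * conj β) by ring,
    Complex.mul_conj', Complex.mul_conj', hβsq]
  ring

theorem adjoint_comp_self_eq (hnorm : ‖α‖ ^ 2 + ‖β‖ ^ 2 = 1)
    (hT0 : T (e 0) = (α * conj β) • e 0 + β • e 1)
    (hTn : ∀ n : ℕ, 1 ≤ n → T (e n) = e (n + 1)) :
    adjoint T ∘L T = 1 - ((‖α‖ : ℂ) ^ 4) • rankOne ℂ (e 0) (e 0) := by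
  refine (default : HilbertBasis ℕ ℂ H).continuousLinearMap_ext fun m n => ?_
  simp only [coe_default_hilbertBasis, comp_apply, adjoint_inner_right, sub_apply,
    one_apply_eq_self, smul_apply, rankOne_apply, inner_sub_right, inner_smul_right, inner_e_e]
  rcases m with _ | j <;> rcases n with _ | k
  · rw [inner_T_e_zero_self hnorm hT0]; simp
  · simp [hT0, hTn (k + 1), inner_add_left, inner_smul_left, inner_e_e]
  · simp [hT0, hTn (j + 1), inner_add_right, inner_smul_right, inner_e_e]
  · simp [hTn (j + 1), hTn (k + 1), inner_e_e]

end Shift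

/-- `T_{α,β}` is irreducible: it has no nontrivial reducing subspaces. -/
theorem T_irreducible (α β : ℂ) (hα : α ≠ 0) (hβ : β ≠ 0)
    (hnorm : ‖α‖ ^ 2 + ‖β‖ ^ 2 = 1)
    (T : H →L[ℂ] H)
    (hT0 : T (e 0) = (α * conj β) • e 0 + β • e 1)
    (hTn : ∀ n : ℕ, 1 ≤ n → T (e n) = e (n + 1))
    (M : Submodule ℂ H) (hMcl : IsClosed (M : Set H))
    (hMinv : ∀ x ∈ M, T x ∈ M) (hMperp : ∀ x ∈ Mᗮ, T x ∈ Mᗮ) :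
    M = ⊥ ∨ M = ⊤ := by
  have : CompleteSpace M := hMcl.completeSpace_coe
  have hα4 : (‖α‖ : ℂ) ^ 4 ≠ 0 := by simpa using hα
  have hproj : ∀ x ∈ M, inner ℂ (e 0) x • e 0 ∈ M := by
    intro x hx
    have hTTx : x - adjoint T (T x) = ((‖α‖ : ℂ) ^ 4 * inner ℂ (e 0) x) • e 0 := by
      rw [← comp_apply, adjoint_comp_self_eq hnorm hT0 hTn]
      simp [smul_smul]
    rw [← M.smul_mem_iff hα4, smul_smul, ← hTTx]
    exact M.sub_mem hx (T.adjoint_apply_mem_of_orthogonal M hMperp (hMinv x hx))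
  rcases M.mem_or_mem_orthogonal_of_inner_smul_mem (e 0) hproj with h0 | h0
  · exact .inr (M.eq_top_of_e_zero_mem hβ hT0 hTn hMcl hMinv h0)
  · refine .inl ((Submodule.orthogonal_eq_top_iff M).1 ?_)
    exact Mᗮ.eq_top_of_e_zero_mem hβ hT0 hTn M.isClosed_orthogonal hMperp h0

end
end

section
/- Let α, β be nonzero complex numbers with |α|² + |β|² = 1 and set p = (conj(β)/conj(α))·(1+|α|²). Let u be the unique real root of the cubic z³ + 3z² + 2z − 1. Then |p| ≥ 1 if and only if |α|² ≤ 1/(u+1). -/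
/-!
Writing `a = |α|²`, we have `|p| = |β| (1 + a) / |α|` and `|β|² = 1 - a`, so squaring turns
`|p| ≥ 1` into `a ≤ (1 - a)(1 + a)²`, i.e. `a³ + a² ≤ 1`. The substitution `v = u + 1` turns the
cubic into `v³ = v + 1`, whence `t = 1/v` satisfies `t³ + t² = 1`; since `x ↦ x³ + x²` is strictly
increasing on `[0, ∞)`, the condition `a³ + a² ≤ 1` is equivalent to `a ≤ t`.
-/

open scoped ComplexConjugate

theorem norm_conj_div_conj_mul_one_add_sq (α β : ℂ) :
    ‖(conj β / conj α) * (1 + (‖α‖ : ℂ) ^ 2)‖ = ‖β‖ / ‖α‖ * (1 + ‖α‖ ^ 2) := by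
  rw [norm_mul, norm_div, Complex.norm_conj, Complex.norm_conj, ← Complex.ofReal_pow,
    ← Complex.ofReal_one, ← Complex.ofReal_add, Complex.norm_of_nonneg (by positivity)]

theorem one_le_div_mul_one_add_sq_iff {x y : ℝ} (hx : 0 < x) (hy : 0 ≤ y)
    (hxy : x ^ 2 + y ^ 2 = 1) :
    1 ≤ y / x * (1 + x ^ 2) ↔ (x ^ 2) ^ 3 + (x ^ 2) ^ 2 ≤ 1 := by
  have hy2 : y ^ 2 = 1 - x ^ 2 := by linarith
  calc 1 ≤ y / x * (1 + x ^ 2)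
      ↔ x ≤ y * (1 + x ^ 2) := by rw [div_mul_eq_mul_div, one_le_div₀ hx]
    _ ↔ x ^ 2 ≤ (y * (1 + x ^ 2)) ^ 2 := (pow_le_pow_iff_left₀ hx.le (by positivity) two_ne_zero).symm
    _ ↔ (x ^ 2) ^ 3 + (x ^ 2) ^ 2 ≤ 1 := by
      rw [mul_pow, hy2]
      constructor <;> intro h <;> nlinarith

theorem strictMonoOn_pow_three_add_sq : StrictMonoOn (fun x : ℝ ↦ x ^ 3 + x ^ 2) (Set.Ici 0) :=
  (pow_left_strictMonoOn₀ three_ne_zero).add (pow_left_strictMonoOn₀ two_ne_zero)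

theorem add_one_pow_three_of_cubic {u : ℝ} (hu : u ^ 3 + 3 * u ^ 2 + 2 * u - 1 = 0) :
    (u + 1) ^ 3 = (u + 1) + 1 := by
  linear_combination hu

theorem pos_of_pow_three_eq_add_one {v : ℝ} (hv : v ^ 3 = v + 1) : 0 < v := by
  nlinarith [sq_nonneg v, sq_nonneg (v - 1), sq_nonneg (v + 1)]

theorem inv_pow_three_add_inv_sq_of_pow_three_eq_add_one {v : ℝ} (hv : v ^ 3 = v + 1) :
    (1 / v) ^ 3 + (1 / v) ^ 2 = 1 := by
  have hv0 := (pos_of_pow_three_eq_add_one hv).ne'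
  field_simp
  linear_combination -hv

theorem abs_p_ge_one_iff_general (α β : ℂ) (hα : α ≠ 0)
    (hnorm : ‖α‖ ^ 2 + ‖β‖ ^ 2 = 1)
    (p : ℂ) (hp : p = (conj β / conj α) * (1 + (‖α‖ : ℂ) ^ 2))
    (u : ℝ) (hu : u ^ 3 + 3 * u ^ 2 + 2 * u - 1 = 0) :
    1 ≤ ‖p‖ ↔ ‖α‖ ^ 2 ≤ 1 / (u + 1) := by
  have hv := add_one_pow_three_of_cubic hu
  have hv0 : 0 ≤ 1 / (u + 1) := (one_div_pos.mpr (pos_of_pow_three_eq_add_one hv)).le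
  rw [hp, norm_conj_div_conj_mul_one_add_sq,
    one_le_div_mul_one_add_sq_iff (norm_pos_iff.mpr hα) (norm_nonneg β) hnorm]
  conv_lhs => rw [← inv_pow_three_add_inv_sq_of_pow_three_eq_add_one hv]
  exact strictMonoOn_pow_three_add_sq.le_iff_le (Set.mem_Ici.mpr (sq_nonneg _)) hv0

/-- `|p| ≥ 1` iff `|α|² ≤ 1/(u+1)`, where `p = (conj β / conj α)(1 + |α|²)` and `u` is
the unique real root of `z³ + 3z² + 2z − 1`. -/
theorem abs_p_ge_one_iff (α β : ℂ) (hα : α ≠ 0) (hβ : β ≠ 0)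
    (hnorm : ‖α‖ ^ 2 + ‖β‖ ^ 2 = 1)
    (p : ℂ) (hp : p = (conj β / conj α) * (1 + (‖α‖ : ℂ) ^ 2))
    (u : ℝ) (hu : u ^ 3 + 3 * u ^ 2 + 2 * u - 1 = 0)
    (huniq : ∀ y : ℝ, y ^ 3 + 3 * y ^ 2 + 2 * y - 1 = 0 → y = u) :
    1 ≤ ‖p‖ ↔ ‖α‖ ^ 2 ≤ 1 / (u + 1) :=
  abs_p_ge_one_iff_general α β hα hnorm p hp u hu
end

section
/- Let α, β be nonzero complex numbers with |α|² + |β|² = 1. Then for every integer n ≥ 1: |α|^{2n}·|β|^{2n−2}·|αβ|·(1−|αβ|) + |αβ|·(1−|αβ|^{2n})/(1+|αβ|) ≤ 1. -/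
/-! Since `|α|, |β| ≤ 1`, the first summand is at most `|αβ| (1 - |αβ|) ≤ 1 - |αβ|`, and the
second is at most `|αβ|` because `1 - |αβ|^{2n} ≤ 1 + |αβ|`. -/

lemma le_one_of_sq_add_sq_eq_one {a b : ℝ} (h : a ^ 2 + b ^ 2 = 1) : a ≤ 1 :=
  (abs_le.mp ((sq_le_one_iff_abs_le_one a).mp (by nlinarith [sq_nonneg b]))).2

lemma mul_mul_one_sub_le_one_sub {x c : ℝ} (hx : x ≤ 1) (hc₀ : 0 ≤ c) (hc₁ : c ≤ 1) :
    x * c * (1 - c) ≤ 1 - c := by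
  have hxc : x * c ≤ 1 := by nlinarith
  nlinarith [sub_nonneg.mpr hc₁]

lemma mul_one_sub_div_one_add_le_self {c y : ℝ} (hc : 0 ≤ c) (hy : 0 ≤ y) :
    c * (1 - y) / (1 + c) ≤ c := by
  rw [div_le_iff₀ (by linarith)]
  nlinarith

theorem monomial_wsp_inequality_general (α β : ℂ)
    (hnorm : ‖α‖ ^ 2 + ‖β‖ ^ 2 = 1) :
    ∀ n : ℕ, 1 ≤ n →
      ‖α‖ ^ (2 * n) * ‖β‖ ^ (2 * n - 2) *
          (‖α * β‖) * (1 - ‖α * β‖) +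
        ‖α * β‖ * (1 - ‖α * β‖ ^ (2 * n)) /
          (1 + ‖α * β‖) ≤ 1 := by
  intro n _
  have hα : ‖α‖ ≤ 1 := le_one_of_sq_add_sq_eq_one hnorm
  have hβ : ‖β‖ ≤ 1 := le_one_of_sq_add_sq_eq_one ((add_comm _ _).trans hnorm)
  have hαβ : ‖α * β‖ ≤ 1 := by
    rw [norm_mul]
    exact mul_le_one₀ hα (norm_nonneg β) hβ
  have hpow : ‖α‖ ^ (2 * n) * ‖β‖ ^ (2 * n - 2) ≤ 1 :=
    mul_le_one₀ (pow_le_one₀ (norm_nonneg α) hα) (by positivity) (pow_le_one₀ (norm_nonneg β) hβ)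
  linarith [mul_mul_one_sub_le_one_sub hpow (norm_nonneg _) hαβ,
    mul_one_sub_div_one_add_le_self (norm_nonneg (α * β)) (by positivity : 0 ≤ ‖α * β‖ ^ (2 * n))]

/-- For nonzero `α, β` with `|α|² + |β|² = 1` and every `n ≥ 1`:
`|α|^{2n} |β|^{2n−2} |αβ| (1−|αβ|) + |αβ| (1−|αβ|^{2n}) / (1+|αβ|) ≤ 1`. -/
theorem monomial_wsp_inequality (α β : ℂ) (hα : α ≠ 0) (hβ : β ≠ 0)
    (hnorm : ‖α‖ ^ 2 + ‖β‖ ^ 2 = 1) :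
    ∀ n : ℕ, 1 ≤ n →
      ‖α‖ ^ (2 * n) * ‖β‖ ^ (2 * n - 2) *
          (‖α * β‖) * (1 - ‖α * β‖) +
        ‖α * β‖ * (1 - ‖α * β‖ ^ (2 * n)) /
          (1 + ‖α * β‖) ≤ 1 :=
  monomial_wsp_inequality_general α β hnorm
end

section
/- Let α, β be nonzero complex numbers with |α|² + |β|² = 1, let a be a complex number with 0 < |a| < 1 and a ≠ α·conj(β), and let γ be the unique real root of the cubic z³ + 7z² + 12z − 1. If |αβ| − |α|²·(1 − |α|⁴·(1−|a|²)/|1 − conj(a)·α·conj(β)|²)·(1−|αβ|) < 0, then |β|² < 1/(4+γ). (This inequality is the condition |r| < 1 governing failure of the wandering subspace property for the invariant subspace associated with the Blaschke factor θ(z) = (z−a)/(1−conj(a)z).) -/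
open scoped ComplexConjugate

/-!
Write `t = ‖β‖²`, so `‖α‖² = 1 - t` and `‖αβ‖² = t (1 - t)`. Since `|a| < 1` the subtracted
fraction in the hypothesis is nonnegative, so the hypothesis forces `‖αβ‖ < ‖α‖² (1 - ‖αβ‖)`,
i.e. `‖αβ‖ (2 - t) < 1 - t`. Squaring and cancelling `1 - t` gives `t (2 - t)² < 1 - t`, that is
`t³ - 4t² + 5t - 1 < 0`. This cubic is increasing on `(-∞, 1]` and vanishes at `1 / (4 + γ)`,
hence `t < 1 / (4 + γ)`.
-/

/-- Substituting `y = 4 + γ` turns `γ³ + 7γ² + 12γ - 1` into `y³ - 5y² + 4y - 1`, whose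
reversal is this cubic. -/
def wspCubic (t : ℝ) : ℝ := t ^ 3 - 4 * t ^ 2 + 5 * t - 1

theorem wspCubic_one_div_four_add {γ : ℝ} (hγ : γ ^ 3 + 7 * γ ^ 2 + 12 * γ - 1 = 0) :
    wspCubic (1 / (4 + γ)) = 0 := by
  have h4γ : 4 + γ ≠ 0 := by
    rintro h
    rw [show γ = -4 by linarith] at hγ
    norm_num at hγ
  have hscaled : (4 + γ) ^ 3 * wspCubic (1 / (4 + γ)) = -(γ ^ 3 + 7 * γ ^ 2 + 12 * γ - 1) := by
    unfold wspCubic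
    field_simp
    ring
  rw [hγ, neg_zero] at hscaled
  exact (mul_eq_zero.1 hscaled).resolve_left (pow_ne_zero 3 h4γ)

theorem wspCubic_monotoneOn : MonotoneOn wspCubic (Set.Iic 1) := by
  intro u hu v hv huv
  have hu' : 0 ≤ 1 - u := sub_nonneg.2 hu
  have hv' : 0 ≤ 1 - v := sub_nonneg.2 hv
  have hdiff : wspCubic v - wspCubic u = (v - u) *
      ((1 - u) ^ 2 + (1 - u) * (1 - v) + (1 - v) ^ 2 + (1 - u) + (1 - v)) := by
    unfold wspCubic
    ring
  have hfactor : 0 ≤ (1 - u) ^ 2 + (1 - u) * (1 - v) + (1 - v) ^ 2 + (1 - u) + (1 - v) := by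
    have := mul_nonneg hu' hv'
    positivity
  nlinarith [mul_nonneg (sub_nonneg.2 huv) hfactor]

theorem lt_of_wspCubic_lt {t x : ℝ} (ht : t ≤ 1) (h : wspCubic t < wspCubic x) : t < x := by
  by_contra! hxt
  exact h.not_ge (wspCubic_monotoneOn (hxt.trans ht) ht hxt)

theorem wspCubic_sq_neg {x y : ℝ} (hx : 0 ≤ x) (hy : 0 ≤ y) (hxy : x ^ 2 + y ^ 2 = 1)
    (h : x * y < x ^ 2 * (1 - x * y)) : wspCubic (y ^ 2) < 0 := by
  have hlin : x * y * (2 - y ^ 2) < 1 - y ^ 2 := by nlinarith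
  have hlin0 : 0 ≤ x * y * (2 - y ^ 2) := by nlinarith [mul_nonneg hx hy]
  have hsq : x ^ 2 * y ^ 2 * (2 - y ^ 2) ^ 2 < (1 - y ^ 2) ^ 2 := by
    have := pow_lt_pow_left₀ hlin hlin0 two_ne_zero
    linarith [show (x * y * (2 - y ^ 2)) ^ 2 = x ^ 2 * y ^ 2 * (2 - y ^ 2) ^ 2 by ring]
  rw [show x ^ 2 = 1 - y ^ 2 by linarith] at hsq
  have hcancel : y ^ 2 * (2 - y ^ 2) ^ 2 < 1 - y ^ 2 := by
    have hpos : 0 < 1 - y ^ 2 := hlin0.trans_lt hlin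
    nlinarith
  unfold wspCubic
  linarith

theorem blaschke_wsp_failure_necessary_general (α β a : ℂ)
    (hnorm : ‖α‖ ^ 2 + ‖β‖ ^ 2 = 1)
    (ha1 : ‖a‖ < 1)
    (γ : ℝ) (hγ : γ ^ 3 + 7 * γ ^ 2 + 12 * γ - 1 = 0)
    (hr : ‖α * β‖ -
        ‖α‖ ^ 2 *
          (1 - ‖α‖ ^ 4 * (1 - ‖a‖ ^ 2) /
            ‖1 - conj a * (α * conj β)‖ ^ 2) *
          (1 - ‖α * β‖) < 0) :
    ‖β‖ ^ 2 < 1 / (4 + γ) := by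
  have hfrac : 0 ≤ ‖α‖ ^ 4 * (1 - ‖a‖ ^ 2) / ‖1 - conj a * (α * conj β)‖ ^ 2 := by
    have : 0 ≤ 1 - ‖a‖ ^ 2 := by nlinarith [norm_nonneg a]
    positivity
  rw [norm_mul] at hr
  have hprod : ‖α‖ * ‖β‖ ≤ 1 := by nlinarith [sq_nonneg (‖α‖ - ‖β‖)]
  have hlt : ‖α‖ * ‖β‖ < ‖α‖ ^ 2 * (1 - ‖α‖ * ‖β‖) := by
    nlinarith [mul_nonneg (mul_nonneg (sq_nonneg ‖α‖) hfrac) (sub_nonneg.2 hprod)]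
  have hneg := wspCubic_sq_neg (norm_nonneg α) (norm_nonneg β) hnorm hlt
  rw [← wspCubic_one_div_four_add hγ] at hneg
  exact lt_of_wspCubic_lt (by nlinarith [sq_nonneg ‖α‖]) hneg

/-- If the quantity `|r| < 1` condition holds for the Blaschke factor with zero `a`,
then `|β|² < 1/(4+γ)`, `γ` being the unique real root of `z³ + 7z² + 12z − 1`. -/
theorem blaschke_wsp_failure_necessary (α β a : ℂ) (hα : α ≠ 0) (hβ : β ≠ 0)
    (hnorm : ‖α‖ ^ 2 + ‖β‖ ^ 2 = 1)
    (ha0 : 0 < ‖a‖) (ha1 : ‖a‖ < 1) (ha : a ≠ α * conj β)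
    (γ : ℝ) (hγ : γ ^ 3 + 7 * γ ^ 2 + 12 * γ - 1 = 0)
    (hγuniq : ∀ y : ℝ, y ^ 3 + 7 * y ^ 2 + 12 * y - 1 = 0 → y = γ)
    (hr : ‖α * β‖ -
        ‖α‖ ^ 2 *
          (1 - ‖α‖ ^ 4 * (1 - ‖a‖ ^ 2) /
            ‖1 - conj a * (α * conj β)‖ ^ 2) *
          (1 - ‖α * β‖) < 0) :
    ‖β‖ ^ 2 < 1 / (4 + γ) :=
  blaschke_wsp_failure_necessary_general α β a hnorm ha1 γ hγ hr
end

section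
/- Let α, β be nonzero complex numbers with |α|² + |β|² = 1 and let γ be the unique real root of the cubic z³ + 7z² + 12z − 1. If |β|² < 1/(4+γ), then there exists a complex number a with 0 < |a| < 1 and a ≠ α·conj(β) such that |αβ| − |α|²·(1 − |α|⁴·(1−|a|²)/|1 − conj(a)·α·conj(β)|²)·(1−|αβ|) < 0. (Consequently there exists an S_{α,β}-invariant subspace M, associated with the Blaschke factor θ(z) = (z−a)/(1−conj(a)z), which is not generated by its wandering subspace.) -/
open scoped ComplexConjugate

/-!
Write `X = |α|²` and `t = |αβ| = √(X(1 - X))`. The substitution `c = (3 + γ)/(4 + γ)` turns the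
cubic in `γ` into `c³ + c² = 1`, so the hypothesis on `|β|²` says `X > c`, i.e. `X³ + X² > 1`;
squaring shows this is equivalent to `t < X(1 - t)`. Taking `a` in the direction of `α β̄`
with `|a| = s` makes the denominator `(1 - st)²`, and the quantity tends to `t - X(1 - t) < 0`
as `s → 1`; an explicit `s` close to `1` does the job.
-/

lemma pos_of_cubic_root {γ : ℝ} (hγ : γ ^ 3 + 7 * γ ^ 2 + 12 * γ - 1 = 0) : 0 < γ := by
  by_contra! h
  rcases le_or_gt γ (-4) with h4 | h4
  · nlinarith [mul_nonneg (mul_nonneg (neg_nonneg.2 h) (by linarith : (0:ℝ) ≤ -(γ + 3)))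
      (by linarith : (0:ℝ) ≤ -(γ + 4))]
  · nlinarith [mul_nonneg (neg_nonneg.2 h) (sq_nonneg (γ + 7 / 2))]

lemma one_lt_cube_add_sq {γ X : ℝ} (hγ : γ ^ 3 + 7 * γ ^ 2 + 12 * γ - 1 = 0)
    (hX : (3 + γ) / (4 + γ) < X) : 1 < X ^ 3 + X ^ 2 := by
  have hγ0 := pos_of_cubic_root hγ
  set c := (3 + γ) / (4 + γ) with hc
  have hc0 : 0 ≤ c := by positivity
  have hc1 : c ^ 3 + c ^ 2 = 1 := by
    rw [hc]
    field_simp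
    linear_combination hγ
  rw [← hc1]
  gcongr

lemma lt_mul_one_sub_of_one_lt_cube_add_sq {X t : ℝ} (hX : 0 < X)
    (ht2 : t ^ 2 = X * (1 - X)) (hcube : 1 < X ^ 3 + X ^ 2) : t < X * (1 - t) := by
  by_contra! h
  have hsq : X ^ 2 ≤ (t * (1 + X)) ^ 2 := pow_le_pow_left₀ hX.le (by linarith) 2
  nlinarith [mul_pos hX hX]

lemma blaschke_defect_neg {X t s : ℝ} (hX0 : 0 < X) (hX1 : X ≤ 1) (ht0 : 0 ≤ t) (ht1 : t < 1)
    (hs0 : 0 ≤ s) (hs1 : s ≤ 1) (hs : 1 - s ^ 2 < (X * (1 - t) - t) * (1 - t)) :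
    t - X * (1 - X ^ 2 * (1 - s ^ 2) / (1 - s * t) ^ 2) * (1 - t) < 0 := by
  have h1t : 0 < 1 - t := by linarith
  have hst : 1 - t ≤ 1 - s * t := by nlinarith
  have hs2 : 0 ≤ 1 - s ^ 2 := by nlinarith
  have hX3 : X ^ 3 ≤ 1 := pow_le_one₀ hX0.le hX1
  have hbound : X ^ 2 * (1 - s ^ 2) / (1 - s * t) ^ 2 * X * (1 - t) ≤ (1 - s ^ 2) / (1 - t) :=
    calc X ^ 2 * (1 - s ^ 2) / (1 - s * t) ^ 2 * X * (1 - t)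
        = X ^ 3 * (1 - s ^ 2) * (1 - t) / (1 - s * t) ^ 2 := by ring
      _ ≤ 1 * (1 - s ^ 2) * (1 - t) / (1 - t) ^ 2 := by gcongr
      _ = (1 - s ^ 2) / (1 - t) := by field_simp
  have hlt : (1 - s ^ 2) / (1 - t) < X * (1 - t) - t := by rwa [div_lt_iff₀ h1t]
  nlinarith

lemma exists_blaschke_radius {X t : ℝ} (hX : 0 < X) (ht : 0 ≤ t) (ht2 : t ^ 2 = X * (1 - X))
    (hcube : 1 < X ^ 3 + X ^ 2) :
    ∃ s : ℝ, t < s ∧ s < 1 ∧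
      t - X * (1 - X ^ 2 * (1 - s ^ 2) / (1 - s * t) ^ 2) * (1 - t) < 0 := by
  have hX1 : X ≤ 1 := by nlinarith [sq_nonneg t]
  have ht1 : t ≤ 1 / 2 := by nlinarith [sq_nonneg (X - 1 / 2)]
  have hδ : 0 < X * (1 - t) - t := sub_pos.2 (lt_mul_one_sub_of_one_lt_cube_add_sq hX ht2 hcube)
  set ε := (X * (1 - t) - t) * (1 - t) with hε
  have hε0 : 0 < ε := mul_pos hδ (by linarith)
  have hε1 : ε ≤ 1 := by rw [hε]; nlinarith
  -- `1 - s² = ε/2 - ε²/16 < ε` for `s = 1 - ε/4`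
  refine ⟨1 - ε / 4, by linarith, by linarith, ?_⟩
  exact blaschke_defect_neg hX hX1 ht (by linarith) (by linarith) (by linarith) (by nlinarith)

lemma norm_ofReal_div_norm_mul {w : ℂ} (hw : w ≠ 0) (s : ℝ) :
    ‖((s / ‖w‖ : ℝ) : ℂ) * w‖ = |s| := by
  rw [norm_mul, Complex.norm_real, Real.norm_eq_abs, abs_div, abs_norm,
    div_mul_cancel₀ _ (norm_ne_zero_iff.2 hw)]

lemma conj_ofReal_div_norm_mul_mul (w : ℂ) (s : ℝ) :
    conj (((s / ‖w‖ : ℝ) : ℂ) * w) * w = ((s * ‖w‖ : ℝ) : ℂ) := by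
  rcases eq_or_ne w 0 with rfl | hw
  · simp
  rw [map_mul, Complex.conj_ofReal, mul_assoc, Complex.conj_mul', ← Complex.ofReal_pow,
    ← Complex.ofReal_mul]
  congr 1
  field_simp

theorem blaschke_wsp_failure_exists_general (α β : ℂ) (hα : α ≠ 0) (hβ : β ≠ 0)
    (hnorm : ‖α‖ ^ 2 + ‖β‖ ^ 2 = 1)
    (γ : ℝ) (hγ : γ ^ 3 + 7 * γ ^ 2 + 12 * γ - 1 = 0)
    (hβγ : ‖β‖ ^ 2 < 1 / (4 + γ)) :
    ∃ a : ℂ, 0 < ‖a‖ ∧ ‖a‖ < 1 ∧ a ≠ α * conj β ∧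
      ‖α * β‖ -
        ‖α‖ ^ 2 *
          (1 - ‖α‖ ^ 4 * (1 - ‖a‖ ^ 2) /
            ‖1 - conj a * (α * conj β)‖ ^ 2) *
          (1 - ‖α * β‖) < 0 := by
  have h4γ : 0 < 4 + γ := by linarith [pos_of_cubic_root hγ]
  have hX : (3 + γ) / (4 + γ) < ‖α‖ ^ 2 := by
    rw [div_lt_iff₀ h4γ]
    nlinarith [(lt_div_iff₀ h4γ).1 hβγ]
  have ht2 : ‖α * β‖ ^ 2 = ‖α‖ ^ 2 * (1 - ‖α‖ ^ 2) := by
    rw [norm_mul, mul_pow, ← hnorm]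
    ring
  obtain ⟨s, hts, hs1, hneg⟩ := exists_blaschke_radius (by positivity) (norm_nonneg _) ht2
    (one_lt_cube_add_sq hγ hX)
  set w := α * conj β
  have hw : ‖w‖ = ‖α * β‖ := by simp [w]
  have hw0 : w ≠ 0 := mul_ne_zero hα ((map_ne_zero _).2 hβ)
  have hs0 : 0 < s := (norm_nonneg _).trans_lt hts
  have ha : ‖((s / ‖w‖ : ℝ) : ℂ) * w‖ = s := by
    rw [norm_ofReal_div_norm_mul hw0, abs_of_pos hs0]
  have hden : ‖1 - conj (((s / ‖w‖ : ℝ) : ℂ) * w) * w‖ = 1 - s * ‖α * β‖ := by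
    rw [conj_ofReal_div_norm_mul_mul, ← Complex.ofReal_one, ← Complex.ofReal_sub,
      Complex.norm_real, Real.norm_eq_abs, hw, abs_of_pos]
    nlinarith [norm_nonneg (α * β)]
  refine ⟨((s / ‖w‖ : ℝ) : ℂ) * w, by rwa [ha], by rwa [ha], fun h => ?_, ?_⟩
  · exact hts.ne (by rw [← hw, ← h, ha])
  · rw [ha, hden, show ‖α‖ ^ 4 = (‖α‖ ^ 2) ^ 2 by ring]
    exact hneg

/-- If `|β|² < 1/(4+γ)`, `γ` being the unique real root of `z³ + 7z² + 12z − 1`, then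
there exists a Blaschke zero `a` for which the `|r| < 1` condition (failure of the
wandering subspace property) holds. -/
theorem blaschke_wsp_failure_exists (α β : ℂ) (hα : α ≠ 0) (hβ : β ≠ 0)
    (hnorm : ‖α‖ ^ 2 + ‖β‖ ^ 2 = 1)
    (γ : ℝ) (hγ : γ ^ 3 + 7 * γ ^ 2 + 12 * γ - 1 = 0)
    (hγuniq : ∀ y : ℝ, y ^ 3 + 7 * y ^ 2 + 12 * y - 1 = 0 → y = γ)
    (hβγ : ‖β‖ ^ 2 < 1 / (4 + γ)) :
    ∃ a : ℂ, 0 < ‖a‖ ∧ ‖a‖ < 1 ∧ a ≠ α * conj β ∧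
      ‖α * β‖ -
        ‖α‖ ^ 2 *
          (1 - ‖α‖ ^ 4 * (1 - ‖a‖ ^ 2) /
            ‖1 - conj a * (α * conj β)‖ ^ 2) *
          (1 - ‖α * β‖) < 0 :=
  blaschke_wsp_failure_exists_general α β hα hβ hnorm γ hγ hβγ
end

section
/- Let α, β be nonzero complex numbers with |α|² + |β|² = 1 and let γ be the unique real root of the cubic z³ + 7z² + 12z − 1. Then |β|² < 1/(4+γ) if and only if |αβ| < |α|²·(1 − |αβ|). -/
/-!
Put `t = |β|²`, so `|α|² = 1 - t` and `|αβ|² = t (1 - t)`. Squaring, the inequality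
`|αβ| < |α|² (1 - |αβ|)`, i.e. `|αβ| (2 - t) < 1 - t`, becomes `cubic t < 0`.
Substituting `z = 1/u - 4` into `z³ + 7z² + 12z − 1` shows that `1/(4 + γ)` is a root of `cubic`,
and `cubic` is strictly increasing on `(-∞, 1]`, which contains all its real roots; hence
`cubic t < 0 ↔ t < 1/(4 + γ)`.
-/

open Set

def cubic (t : ℝ) : ℝ := t ^ 3 - 4 * t ^ 2 + 5 * t - 1

lemma strictMonoOn_cubic : StrictMonoOn cubic (Iic 1) := by
  intro x hx y hy hxy
  simp only [mem_Iic] at hx hy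
  have hpos : 0 < x ^ 2 + x * y + y ^ 2 - 4 * x - 4 * y + 5 := by
    nlinarith [mul_nonneg (sub_nonneg.2 hx) (sub_nonneg.2 hy), sq_nonneg (1 - x), sq_nonneg (1 - y)]
  have : cubic y - cubic x = (y - x) * (x ^ 2 + x * y + y ^ 2 - 4 * x - 4 * y + 5) := by
    unfold cubic; ring
  nlinarith [mul_pos (sub_pos.2 hxy) hpos]

lemma le_one_of_cubic_eq_zero {u : ℝ} (hu : cubic u = 0) : u ≤ 1 := by
  by_contra! h
  have : cubic u = (u - 1) ^ 2 * (u - 2) + 1 := by unfold cubic; ring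
  nlinarith [sq_nonneg (u - 1), sq_nonneg (u - 5 / 3)]

lemma cubic_one_div_four_add {γ : ℝ} (hγ : γ ^ 3 + 7 * γ ^ 2 + 12 * γ - 1 = 0) :
    cubic (1 / (4 + γ)) = 0 := by
  have hne : 4 + γ ≠ 0 := by
    intro h
    rw [show γ = -4 by linarith] at hγ
    norm_num at hγ
  unfold cubic
  field_simp
  linear_combination -hγ

lemma mul_lt_sq_mul_one_sub_mul_iff {a b : ℝ} (ha : 0 ≤ a) (hb : 0 ≤ b)
    (hab : a ^ 2 + b ^ 2 = 1) : a * b < a ^ 2 * (1 - a * b) ↔ cubic (b ^ 2) < 0 := by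
  have hb1 : 0 ≤ 1 - b ^ 2 := by nlinarith
  have hsq : (a * b * (2 - b ^ 2)) ^ 2 - (1 - b ^ 2) ^ 2 = (1 - b ^ 2) * cubic (b ^ 2) := by
    unfold cubic; linear_combination (b ^ 2 * (2 - b ^ 2) ^ 2) * hab
  calc a * b < a ^ 2 * (1 - a * b) ↔ a * b * (2 - b ^ 2) < 1 - b ^ 2 := by
        rw [← sub_pos, show a ^ 2 * (1 - a * b) - a * b = 1 - b ^ 2 - a * b * (2 - b ^ 2) by
          linear_combination (1 - a * b) * hab, sub_pos]
    _ ↔ (a * b * (2 - b ^ 2)) ^ 2 < (1 - b ^ 2) ^ 2 :=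
        (pow_lt_pow_iff_left₀ (by nlinarith [mul_nonneg ha hb]) hb1 two_ne_zero).symm
    _ ↔ (1 - b ^ 2) * cubic (b ^ 2) < 0 := by rw [← sub_neg, hsq]
    _ ↔ cubic (b ^ 2) < 0 := by
        rcases hb1.eq_or_lt with h | h
        · rw [← h, show b ^ 2 = 1 by linarith]
          norm_num [cubic]
        · exact ⟨(neg_of_mul_neg_right · h.le), mul_neg_of_pos_of_neg h⟩

theorem beta_sq_lt_iff_general (α β : ℂ)
    (hnorm : ‖α‖ ^ 2 + ‖β‖ ^ 2 = 1)
    (γ : ℝ) (hγ : γ ^ 3 + 7 * γ ^ 2 + 12 * γ - 1 = 0) :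
    ‖β‖ ^ 2 < 1 / (4 + γ) ↔
      ‖α * β‖ < ‖α‖ ^ 2 * (1 - ‖α * β‖) := by
  have hu := cubic_one_div_four_add hγ
  rw [norm_mul, mul_lt_sq_mul_one_sub_mul_iff (norm_nonneg α) (norm_nonneg β) hnorm, ← hu]
  exact (strictMonoOn_cubic.lt_iff_lt (by simp only [mem_Iic]; nlinarith [sq_nonneg ‖α‖])
    (le_one_of_cubic_eq_zero hu)).symm

/-- `|β|² < 1/(4+γ)` iff `|αβ| < |α|²(1 − |αβ|)`, where `γ` is the unique real root of
`z³ + 7z² + 12z − 1`. -/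
theorem beta_sq_lt_iff (α β : ℂ) (hα : α ≠ 0) (hβ : β ≠ 0)
    (hnorm : ‖α‖ ^ 2 + ‖β‖ ^ 2 = 1)
    (γ : ℝ) (hγ : γ ^ 3 + 7 * γ ^ 2 + 12 * γ - 1 = 0)
    (hγuniq : ∀ y : ℝ, y ^ 3 + 7 * y ^ 2 + 12 * y - 1 = 0 → y = γ) :
    ‖β‖ ^ 2 < 1 / (4 + γ) ↔
      ‖α * β‖ < ‖α‖ ^ 2 * (1 - ‖α * β‖) :=
  beta_sq_lt_iff_general α β hnorm γ hγ
end
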